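/- Let R be a commutative ring, m ∈ R, n ≥ 1, and let a^{(e)}_{i,j} denote the (i,j) entry of T_n(m)^e. Then for every e ≥ 1 and every 1 ≤ j ≤ n: a^{(e)}_{1,j} = C(n-1, j-1)·U_{e-1}^{n-j}·U_e^{j-1} (natural-number powers, with x^0 = 1). -/

import Mathlib

/-- The generalized Fibonacci sequence with parameter `m`:
`U_0 = 0`, `U_1 = 1`, `U_{e+1} = m U_e + U_{e-1}`. -/
def genFibU {R : Type*} [CommRing R] (m : R) : ℕ → R
  | 0 => 0
  | 1 => 1
  | e + 2 => m * genFibU m (e + 1) + genFibU m e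

/-- The `n × n` generalized Fibonacci matrix `T_n(m)`, with 1-based `(i,j)` entry
`m^{i+j-n-1} C(i-1, n-j)` when `i + j ≥ n + 1` and `0` otherwise. -/
def genFibMatrix {R : Type*} [CommRing R] (m : R) (n : ℕ) :
    Matrix (Fin n) (Fin n) R :=
  Matrix.of fun i j =>
    if n ≤ i.val + j.val + 1 then
      m ^ (i.val + j.val + 1 - n) * (Nat.choose i.val (n - 1 - j.val) : R)
    else 0

lemma key_sum {R : Type*} [CommRing R] (n j : ℕ) (hn : 1 ≤ n) (hj : j < n) (a b c : R) :
    ∑ k ∈ Finset.range n, ((Nat.choose (n-1) k : R) * a ^ (n-1-k) * b ^ k *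
      (if n ≤ k + j + 1 then c ^ (k + j + 1 - n) * (Nat.choose k (n-1-j) : R) else 0))
    = (Nat.choose (n-1) j : R) * b ^ (n-1-j) * (c * b + a) ^ j := by
  set s := n - 1 - j with hs
  have hsj : s + j = n - 1 := by omega
  have hsum : ∑ k ∈ Finset.range n, ((Nat.choose (n-1) k : R) * a ^ (n-1-k) * b ^ k *
      (if n ≤ k + j + 1 then c ^ (k + j + 1 - n) * (Nat.choose k s : R) else 0))
      = ∑ k ∈ Finset.Ico s n, ((Nat.choose (n-1) k : R) * a ^ (n-1-k) * b ^ k *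
      (c ^ (k + j + 1 - n) * (Nat.choose k s : R))) := by
    rw [Finset.range_eq_Ico, ← Finset.sum_Ico_consecutive _ (by omega : 0 ≤ s) (by omega : s ≤ n)]
    rw [Finset.sum_congr rfl (g := fun _ => (0:R)) (fun k hk => ?_), Finset.sum_const_zero,
      zero_add]
    · exact Finset.sum_congr rfl fun k hk => by
        rw [if_pos (by simp only [Finset.mem_Ico] at hk; omega)]
    · simp only [Finset.mem_Ico] at hk
      rw [if_neg (by omega), mul_zero]
  rw [hsum, Finset.sum_Ico_eq_sum_range]
  have hns : n - s = j + 1 := by omega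
  rw [hns]
  have hterm : ∀ t ∈ Finset.range (j+1),
      ((Nat.choose (n-1) (s+t) : R) * a ^ (n-1-(s+t)) * b ^ (s+t) *
        (c ^ (s+t + j + 1 - n) * (Nat.choose (s+t) s : R)))
      = (Nat.choose (n-1) j : R) * b ^ s * ((c*b)^t * a^(j-t) * (Nat.choose j t : R)) := by
    intro t ht
    simp only [Finset.mem_range] at ht
    have h1 : s + t + j + 1 - n = t := by omega
    have h2 : n - 1 - (s + t) = j - t := by omega
    have h3 : (Nat.choose (n-1) (s+t) : ℕ) * Nat.choose (s+t) s
        = Nat.choose (n-1) s * Nat.choose j t := by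
      rw [Nat.choose_mul (by omega)]
      have e1 : n - 1 - s = j := by omega
      have e2 : s + t - s = t := by omega
      rw [e1, e2]
    have h4 : Nat.choose (n-1) s = Nat.choose (n-1) j := by
      rw [hs, Nat.choose_symm (by omega)]
    have h5 : ((Nat.choose (n-1) (s+t) : R) * (Nat.choose (s+t) s : R))
        = (Nat.choose (n-1) j : R) * (Nat.choose j t : R) := by
      rw [← Nat.cast_mul, h3, h4, Nat.cast_mul]
    rw [h1, h2, pow_add, mul_pow]
    calc (Nat.choose (n-1) (s+t) : R) * a ^ (j-t) * (b ^ s * b^t) * (c ^ t * (Nat.choose (s+t) s : R))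
        = ((Nat.choose (n-1) (s+t) : R) * (Nat.choose (s+t) s : R)) * (a ^ (j-t) * b ^ s * b^t * c^t) := by ring
      _ = (Nat.choose (n-1) j : R) * b ^ s * (c ^ t * b ^ t * a ^ (j-t) * (Nat.choose j t : R)) := by
          rw [h5]; ring
  rw [Finset.sum_congr rfl hterm, ← Finset.mul_sum, ← add_pow]

/-- First row of `T_n(m)^e` (1-based column index `j = j.val + 1`):
`a^{(e)}_{1,j} = C(n-1, j-1) U_{e-1}^{n-j} U_e^{j-1}`. -/
theorem genFibMatrix_pow_first_row {R : Type*} [CommRing R] (m : R) (n : ℕ) (hn : 1 ≤ n) :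
    ∀ e : ℕ, 1 ≤ e → ∀ j : Fin n,
      ((genFibMatrix m n) ^ e) ⟨0, by omega⟩ j =
        (Nat.choose (n - 1) j.val : R) * genFibU m (e - 1) ^ (n - 1 - j.val) *
          genFibU m e ^ j.val := by
  intro e he
  induction e, he using Nat.le_induction with
  | base =>
    intro j
    rw [pow_one]
    have hU0 : genFibU m (1-1) = 0 := rfl
    have hU1 : genFibU m 1 = 1 := rfl
    rw [hU0, hU1, one_pow]
    simp only [genFibMatrix, Matrix.of_apply]
    by_cases hj : j.val = n - 1
    · rw [if_pos (by omega), hj]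
      rw [show 0+(n-1)+1-n = 0 by omega, show n-1-(n-1) = 0 by omega, pow_zero, pow_zero,
        Nat.choose_self, Nat.choose_self]
      norm_num
    · rw [if_neg (by have := j.isLt; omega), zero_pow (by have := j.isLt; omega : n-1-j.val ≠ 0)]
      ring
  | succ e he ih =>
    intro j
    rw [pow_succ, Matrix.mul_apply]
    have hsum : ∀ k : Fin n, ((genFibMatrix m n) ^ e) ⟨0, by omega⟩ k * genFibMatrix m n k j
        = (Nat.choose (n-1) k.val : R) * genFibU m (e-1) ^ (n-1-k.val) * genFibU m e ^ k.val *
          (if n ≤ k.val + j.val + 1 then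
            m ^ (k.val + j.val + 1 - n) * (Nat.choose k.val (n-1-j.val) : R) else 0) := by
      intro k
      rw [ih k]
      rfl
    rw [Finset.sum_congr rfl (fun k _ => hsum k), Fin.sum_univ_eq_sum_range
      (fun k => (Nat.choose (n-1) k : R) * genFibU m (e-1) ^ (n-1-k) * genFibU m e ^ k *
        (if n ≤ k + j.val + 1 then m ^ (k + j.val + 1 - n) * (Nat.choose k (n-1-j.val) : R) else 0))]
    rw [key_sum n j.val hn j.isLt (genFibU m (e-1)) (genFibU m e) m]
    have h1 : e + 1 - 1 = e := by omega
    have h2 : genFibU m (e+1) = m * genFibU m e + genFibU m (e-1) := by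
      obtain ⟨e', rfl⟩ : ∃ e', e = e' + 1 := ⟨e - 1, by omega⟩
      simp [genFibU]
    rw [h1, h2]
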